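/- Let E be a Dedekind complete Riesz space with weak order unit e, and let (f_n) be an order bounded sequence in E₊. Then (1/n)·∑_{k=0}^{n-1} f_k → 0 in order if and only if there exists a density zero sequence (p_n) of components of e such that (e - p_n)·f_n → 0 in order (where multiplication by the component e - p_n is the corresponding band projection applied to f_n). -/

import Mathlib

open Finset

section Defs

variable {E : Type*} [ConditionallyCompleteLattice E] [AddCommGroup E] [Module ℝ E]
  [CovariantClass E E (· + ·) (· ≤ ·)]

/-- Order convergence of a sequence: there is a sequence `u ↓ 0` dominating the tails. -/
def OrderConvergesTo (f : ℕ → E) (x : E) : Prop :=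
  ∃ u : ℕ → E, Antitone u ∧ IsGLB (Set.range u) (0 : E) ∧
    ∀ m : ℕ, ∃ N : ℕ, ∀ n ≥ N, |f n - x| ≤ u m

/-- `p` is a component of `e`. -/
def IsComponent (e p : E) : Prop := 0 ≤ p ∧ p ≤ e ∧ p ⊓ (e - p) = 0

/-- A sequence of components is of density zero if its Cesàro means order converge to `0`. -/
def DensityZero (p : ℕ → E) : Prop :=
  OrderConvergesTo (fun n => (n : ℝ)⁻¹ • ∑ k ∈ Finset.range n, p k) (0 : E)

/-- The band projection (onto the band generated by `p`) applied to a positive element `f`. -/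
noncomputable def bandProj (p f : E) : E :=
  sSup (Set.range fun n : ℕ => f ⊓ (n : ℝ) • p)

end Defs

section Systems

variable (E : Type*) [ConditionallyCompleteLattice E] [AddCommGroup E] [Module ℝ E]
  [CovariantClass E E (· + ·) (· ≤ ·)]

/-- The data of a conditional expectation preserving system, without the
intertwining identity `T S = T`: a Dedekind complete Riesz space with weak order unit `e`,
the `f`-algebra multiplication of `E_e` (with unit `e`), a strictly-positive-free
conditional expectation operator `T` with `T e = e`, and a Riesz homomorphism `S`
with `S e = e`. -/
structure PreCEPS where
  e : E
  e_pos : 0 < e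
  weakUnit : ∀ x : E, e ⊓ |x| = 0 → x = 0
  /-- the `f`-algebra multiplication (of the ideal generated by `e`) -/
  mul : E →ₗ[ℝ] E →ₗ[ℝ] E
  mul_comm' : ∀ x y, mul x y = mul y x
  mul_pos' : ∀ x y, 0 ≤ x → 0 ≤ y → 0 ≤ mul x y
  one_mul' : ∀ x, mul e x = x
  finf' : ∀ x y z, x ⊓ y = 0 → 0 ≤ z → (mul x z) ⊓ y = 0
  /-- the conditional expectation operator -/
  T : E →ₗ[ℝ] E
  T_pos : ∀ x, 0 ≤ x → 0 ≤ T x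
  T_proj : ∀ x, T (T x) = T x
  T_e : T e = e
  T_oc : ∀ (s : Set E) (x : E), s.Nonempty → DirectedOn (· ≤ ·) s → IsLUB s x →
    IsLUB (T '' s) (T x)
  T_range_closed : ∀ (s : Set E) (x : E), (∀ y ∈ s, T y = y) → IsLUB s x → T x = x
  /-- the Riesz homomorphism -/
  S : E →ₗ[ℝ] E
  S_sup : ∀ x y, S (x ⊔ y) = S x ⊔ S y
  S_e : S e = e

/-- A conditional expectation preserving system. -/
structure CEPS extends PreCEPS E where
  TS : ∀ x, T (S x) = T x

variable {E}

/-- Strict positivity of the conditional expectation operator of a system. -/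
def CEPS.StrictPos (A : CEPS E) : Prop := ∀ x : E, 0 ≤ x → A.T x = 0 → x = 0

/-- Ergodicity, characterised by Cesàro convergence of
`T((S^k p)·q)` to `Tp·Tq` for all components `p, q` of `e`. -/
def CEPS.Ergodic (A : CEPS E) : Prop :=
  ∀ p q : E, IsComponent A.e p → IsComponent A.e q →
    OrderConvergesTo
      (fun n => (n : ℝ)⁻¹ • ∑ k ∈ Finset.range n, A.T (A.mul ((A.S ^ k) p) q))
      (A.mul (A.T p) (A.T q))

/-- Conditional weak mixing. -/
def CEPS.WeakMixing (A : CEPS E) : Prop :=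
  ∀ p q : E, IsComponent A.e p → IsComponent A.e q →
    OrderConvergesTo
      (fun n => (n : ℝ)⁻¹ • ∑ k ∈ Finset.range n,
        |A.T (A.mul ((A.S ^ k) p) q) - A.mul (A.T p) (A.T q)|) (0 : E)

end Systems

section Tensor

variable {E F G : Type*}
  [ConditionallyCompleteLattice E] [AddCommGroup E] [Module ℝ E]
  [CovariantClass E E (· + ·) (· ≤ ·)]
  [ConditionallyCompleteLattice F] [AddCommGroup F] [Module ℝ F]
  [CovariantClass F F (· + ·) (· ≤ ·)]
  [ConditionallyCompleteLattice G] [AddCommGroup G] [Module ℝ G]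
  [CovariantClass G G (· + ·) (· ≤ ·)]

/-- A realisation of the Dedekind completion of the Fremlin tensor product of the
underlying spaces of two conditional expectation preserving systems, carrying the
pre-system structure (Grobler's tensor product conditional expectation and the tensor
product Riesz homomorphism), but without the intertwining identity for the product. -/
structure TensorPreCEPS (A : CEPS E) (B : CEPS F) (G : Type*)
    [ConditionallyCompleteLattice G] [AddCommGroup G] [Module ℝ G]
    [CovariantClass G G (· + ·) (· ≤ ·)] where
  sys : PreCEPS G
  tmul : E →ₗ[ℝ] F →ₗ[ℝ] G
  tmul_pos : ∀ x y, 0 ≤ x → 0 ≤ y → 0 ≤ tmul x y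
  e_def : sys.e = tmul A.e B.e
  T_tmul : ∀ x y, sys.T (tmul x y) = tmul (A.T x) (B.T y)
  S_tmul : ∀ x y, sys.S (tmul x y) = tmul (A.S x) (B.S y)
  mul_tmul : ∀ x y x' y',
    sys.mul (tmul x y) (tmul x' y') = tmul (A.mul x x') (B.mul y y')
  comp_dense : ∀ u : G, IsComponent sys.e u →
    IsLUB {w : G | ∃ p q, IsComponent A.e p ∧ IsComponent B.e q ∧
      tmul p q ≤ u ∧ w = tmul p q} u
  tmul_oc_left : ∀ (x : ℕ → E) (a : E) (y : F), 0 ≤ y →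
    OrderConvergesTo x a → OrderConvergesTo (fun n => tmul (x n) y) (tmul a y)
  tmul_oc_right : ∀ (x : E) (y : ℕ → F) (b : F), 0 ≤ x →
    OrderConvergesTo y b → OrderConvergesTo (fun n => tmul x (y n)) (tmul x b)

/-- As `TensorPreCEPS`, but where the tensor product system is a full conditional
expectation preserving system. -/
structure TensorCEPS (A : CEPS E) (B : CEPS F) (G : Type*)
    [ConditionallyCompleteLattice G] [AddCommGroup G] [Module ℝ G]
    [CovariantClass G G (· + ·) (· ≤ ·)] where
  sys : CEPS G
  tmul : E →ₗ[ℝ] F →ₗ[ℝ] G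
  tmul_pos : ∀ x y, 0 ≤ x → 0 ≤ y → 0 ≤ tmul x y
  e_def : sys.e = tmul A.e B.e
  T_tmul : ∀ x y, sys.T (tmul x y) = tmul (A.T x) (B.T y)
  S_tmul : ∀ x y, sys.S (tmul x y) = tmul (A.S x) (B.S y)
  mul_tmul : ∀ x y x' y',
    sys.mul (tmul x y) (tmul x' y') = tmul (A.mul x x') (B.mul y y')
  comp_dense : ∀ u : G, IsComponent sys.e u →
    IsLUB {w : G | ∃ p q, IsComponent A.e p ∧ IsComponent B.e q ∧
      tmul p q ≤ u ∧ w = tmul p q} u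
  tmul_oc_left : ∀ (x : ℕ → E) (a : E) (y : F), 0 ≤ y →
    OrderConvergesTo x a → OrderConvergesTo (fun n => tmul (x n) y) (tmul a y)
  tmul_oc_right : ∀ (x : E) (y : ℕ → F) (b : F), 0 ≤ x →
    OrderConvergesTo y b → OrderConvergesTo (fun n => tmul x (y n)) (tmul x b)

end Tensor

/-!
Both directions rest on one criterion: a bounded sequence `x ≥ 0` order converges to `0` as soon
as, for every index `i`, eventually `x n ≤ y n + c i` with `y → 0` in order and `inf c = 0`; the
tail suprema of `x` then witness the convergence.

Backward: on the band of `p n`, `f n ≤ b` is at most `t • p n + (b - t • e)⁺`, the rest of `f n`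
is `(e - p n) · f n`. So the Cesàro means of `f` are bounded by the sum of `t` times those of `p`,
those of `(e - p n) · f n` (which tend to `0` by Cesàro's lemma), and `(b - t • e)⁺`, and
`inf_t (b - t • e)⁺ = 0` because `e` is a weak unit: the pieces `(b - t • e)⁺ ⊓ e` telescope.

Forward: let `q j n` be the component of `e` on which `f n > e / (j + 1)`. Chebyshev gives
`q j n ≤ (j + 1) • f n`, so the Cesàro means of `q j` tend to `0`, and the component `d j m` on
which they stay below `e / 2 ^ (j + 1)` from time `m` on increases to `e`. Put
`p n = ⨆_{j ≤ n} q j n ⊓ d j n`. On `d i M` a level `j < i` is dominated by the level `i`, and the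
levels `j ≥ i` have densities at most `e / 2 ^ (j + 1)`, so the density of `p` is eventually at
most `e / (i + 1) + (e - d i M)`; and `(e - p n) · f n ≤ e / (i + 1) + (e - d i M) · b` once
`n ≥ i, M`.
-/

theorem inf_eq_zero_of_le {E : Type*} [Lattice E] [Zero E] {a b a' b' : E} (ha' : 0 ≤ a')
    (hb' : 0 ≤ b') (ha : a' ≤ a) (hb : b' ≤ b) (h : a ⊓ b = 0) : a' ⊓ b' = 0 :=
  le_antisymm (h ▸ inf_le_inf ha hb) (le_inf ha' hb')

section LatticeOrderedGroup

variable {E : Type*} [Lattice E] [AddCommGroup E] [AddLeftMono E]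

theorem inf_add_le_add_inf {a b c : E} (ha : 0 ≤ a) (hb : 0 ≤ b) (hc : 0 ≤ c) :
    a ⊓ (b + c) ≤ a ⊓ b + a ⊓ c := by
  have h₁ : a ⊓ (b + c) ≤ a ⊓ b + c :=
    calc a ⊓ (b + c) ≤ (a + c) ⊓ (b + c) := inf_le_inf_right _ (le_add_of_nonneg_right hc)
      _ = a ⊓ b + c := (inf_add a b c).symm
  have h₂ : a ⊓ (b + c) ≤ a ⊓ b + a :=
    inf_le_left.trans (le_add_of_nonneg_left (le_inf ha hb))
  calc a ⊓ (b + c) ≤ (a ⊓ b + c) ⊓ (a ⊓ b + a) := le_inf h₁ h₂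
    _ = a ⊓ b + a ⊓ c := by rw [← add_inf, inf_comm c]

theorem inf_nsmul_eq_zero {a b : E} (ha : 0 ≤ a) (hb : 0 ≤ b) (h : a ⊓ b = 0) (n : ℕ) :
    a ⊓ n • b = 0 := by
  induction n with
  | zero => simpa using inf_eq_right.mpr ha
  | succ n ih =>
    refine le_antisymm ?_ (le_inf ha (nsmul_nonneg hb _))
    calc a ⊓ (n + 1) • b = a ⊓ (n • b + b) := by rw [succ_nsmul]
      _ ≤ a ⊓ n • b + a ⊓ b := inf_add_le_add_inf ha (nsmul_nonneg hb n) hb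
      _ = 0 := by rw [ih, h, add_zero]

theorem nsmul_inf_nsmul_eq_zero {a b : E} (ha : 0 ≤ a) (hb : 0 ≤ b) (h : a ⊓ b = 0)
    (m n : ℕ) : m • a ⊓ n • b = 0 := by
  rw [inf_comm]
  exact inf_nsmul_eq_zero (nsmul_nonneg hb n) ha (by rw [inf_comm, inf_nsmul_eq_zero ha hb h]) m

theorem nsmul_le_nsmul_iff_of_ne_zero {a b : E} {n : ℕ} (hn : n ≠ 0) :
    n • a ≤ n • b ↔ a ≤ b := by
  refine ⟨fun h => ?_, fun h => nsmul_le_nsmul_right h n⟩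
  set c := a - b
  have hc : n • c⁺ ≤ n • c⁻ := by
    rw [← sub_nonpos, ← nsmul_sub, posPart_sub_negPart, nsmul_sub, sub_nonpos]
    exact h
  have hpos : c⁺ ≤ c⁺ ⊓ n • c⁻ :=
    le_inf le_rfl ((le_self_nsmul (posPart_nonneg c) hn).trans hc)
  rw [inf_nsmul_eq_zero (posPart_nonneg c) (negPart_nonneg c)
    (posPart_inf_negPart_eq_zero c)] at hpos
  exact sub_nonpos.mp ((le_posPart c).trans hpos)

theorem inf_add_posPart_sub (a b : E) : a ⊓ b + (a - b)⁺ = a := by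
  rw [inf_eq_sub_posPart_sub, sub_add_cancel]

theorem inf_le_inf_add_posPart_sub_inf {x a y : E} (hx : 0 ≤ x) (ha : 0 ≤ a) (hy : 0 ≤ y) :
    x ⊓ y ≤ a ⊓ y + (x - a)⁺ ⊓ y := by
  calc x ⊓ y = y ⊓ (x ⊓ a + (x - a)⁺) := by rw [inf_add_posPart_sub, inf_comm]
    _ ≤ y ⊓ (x ⊓ a) + y ⊓ (x - a)⁺ :=
      inf_add_le_add_inf hy (le_inf hx ha) (posPart_nonneg _)
    _ ≤ a ⊓ y + (x - a)⁺ ⊓ y := by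
      rw [inf_comm y, inf_comm y]
      gcongr
      exact inf_le_right

theorem inf_nsmul_le_of_posPart_sub_inf_eq_zero {x a y : E} (hx : 0 ≤ x) (ha : 0 ≤ a)
    (hy : 0 ≤ y) (h : (x - a)⁺ ⊓ y = 0) (k : ℕ) : x ⊓ k • y ≤ a :=
  calc x ⊓ k • y ≤ a ⊓ k • y + (x - a)⁺ ⊓ k • y :=
        inf_le_inf_add_posPart_sub_inf hx ha (nsmul_nonneg hy k)
    _ ≤ a := by rw [inf_nsmul_eq_zero (posPart_nonneg _) hy h k, add_zero]; exact inf_le_left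

theorem two_pow_nsmul_sum_Ico_le {x : ℕ → E} {a : E} (ha : 0 ≤ a)
    (h : ∀ j, 2 ^ (j + 1) • x j ≤ a) (i n : ℕ) : 2 ^ i • ∑ j ∈ Ico i n, x j ≤ a := by
  induction hk : n - i generalizing i with
  | zero => simpa [Ico_eq_empty_of_le (show n ≤ i by omega)] using ha
  | succ k ih =>
    rw [sum_eq_sum_Ico_succ_bot (show i < n by omega), nsmul_add,
      ← nsmul_le_nsmul_iff_of_ne_zero two_ne_zero, nsmul_add, smul_smul, smul_smul, ← pow_succ',
      two_nsmul]
    exact add_le_add (h i) (ih (i + 1) (by omega))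

theorem posPart_inf_eq_sub (x : E) {e : E} (he : 0 ≤ e) : x⁺ ⊓ e = x⁺ - (x - e)⁺ := by
  have hsup : x⁺ ⊔ e = (x - e)⁺ + e := by
    rw [posPart_def, posPart_def, sup_assoc, sup_of_le_right he, sup_add, zero_add, sub_add_cancel]
  rw [eq_sub_iff_add_eq, ← add_left_inj e, add_assoc, ← hsup, inf_add_sup]

end LatticeOrderedGroup

section ConditionallyComplete

variable {E : Type*} [ConditionallyCompleteLattice E] [AddCommGroup E] [AddLeftMono E]

theorem nonpos_of_forall_nsmul_le {x c : E} (h : ∀ n : ℕ, n • x ≤ c) : x ≤ 0 := by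
  have hbdd : BddAbove (Set.range fun n : ℕ => n • x) := ⟨c, Set.forall_mem_range.2 h⟩
  set s := ⨆ n : ℕ, n • x
  have hs : s ≤ s - x := ciSup_le fun n => le_sub_iff_add_le.2 <| by
    simpa [succ_nsmul] using le_ciSup hbdd (n + 1)
  simpa using le_sub_iff_add_le.1 hs

theorem inf_csSup_le {S : Set E} (hne : S.Nonempty) (hbdd : BddAbove S) {a c : E}
    (h : ∀ x ∈ S, a ⊓ x ≤ c) : a ⊓ sSup S ≤ c := by
  -- `a ⊓ x = a + x - a ⊔ x` turns the bounds on `a ⊓ x` into bounds on `x`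
  have key : sSup S ≤ c - a + a ⊔ sSup S := csSup_le hne fun x hx =>
    calc x = a ⊓ x + a ⊔ x - a := by rw [inf_add_sup, add_sub_cancel_left]
      _ ≤ c + a ⊔ sSup S - a := by gcongr; exacts [h x hx, le_csSup hbdd hx]
      _ = c - a + a ⊔ sSup S := by abel
  calc a ⊓ sSup S = a + sSup S - a ⊔ sSup S := by rw [← inf_add_sup, add_sub_cancel_right]
    _ ≤ a + (c - a + a ⊔ sSup S) - a ⊔ sSup S := by gcongr
    _ = c := by abel

end ConditionallyComplete

section InvNatSMul

variable {E : Type*} [AddCommGroup E] [Module ℝ E]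

theorem nsmul_inv_natCast_smul {n : ℕ} (hn : n ≠ 0) (x : E) : n • ((n : ℝ)⁻¹ • x) = x := by
  rw [← Nat.cast_smul_eq_nsmul ℝ, smul_inv_smul₀ (Nat.cast_ne_zero.2 hn)]

theorem inv_natCast_smul_nsmul {n : ℕ} (hn : n ≠ 0) (x : E) : (n : ℝ)⁻¹ • (n • x) = x := by
  rw [← Nat.cast_smul_eq_nsmul ℝ, inv_smul_smul₀ (Nat.cast_ne_zero.2 hn)]

variable [Lattice E] [AddLeftMono E]

theorem inv_natCast_smul_le_iff {n : ℕ} (hn : n ≠ 0) {x y : E} :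
    (n : ℝ)⁻¹ • x ≤ y ↔ x ≤ n • y := by
  conv_lhs => rw [← nsmul_le_nsmul_iff_of_ne_zero hn, nsmul_inv_natCast_smul hn]

theorem le_inv_natCast_smul_iff {n : ℕ} (hn : n ≠ 0) {x y : E} :
    x ≤ (n : ℝ)⁻¹ • y ↔ n • x ≤ y := by
  conv_lhs => rw [← nsmul_le_nsmul_iff_of_ne_zero hn, nsmul_inv_natCast_smul hn]

theorem inv_natCast_smul_mono (n : ℕ) : Monotone fun x : E => (n : ℝ)⁻¹ • x := by
  intro x y h
  rcases eq_or_ne n 0 with rfl | hn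
  · simp
  · exact (inv_natCast_smul_le_iff hn).2 (by rwa [nsmul_inv_natCast_smul hn])

theorem inv_natCast_smul_nonneg (n : ℕ) {x : E} (hx : 0 ≤ x) : 0 ≤ (n : ℝ)⁻¹ • x := by
  simpa using inv_natCast_smul_mono n hx

theorem inv_natCast_smul_le_inv_natCast_smul {m n : ℕ} (hm : m ≠ 0) (hmn : m ≤ n) {a : E}
    (ha : 0 ≤ a) : (n : ℝ)⁻¹ • a ≤ (m : ℝ)⁻¹ • a := by
  rw [le_inv_natCast_smul_iff hm, smul_comm, inv_natCast_smul_le_iff (by omega)]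
  exact nsmul_le_nsmul_left ha hmn

end InvNatSMul

section CesaroMean

variable {E : Type*} [AddCommGroup E] [Module ℝ E]

noncomputable def cesaroMean (f : ℕ → E) (n : ℕ) : E := (n : ℝ)⁻¹ • ∑ k ∈ range n, f k

theorem sum_range_eq_nsmul_cesaroMean (f : ℕ → E) (n : ℕ) :
    ∑ k ∈ range n, f k = n • cesaroMean f n := by
  rcases eq_or_ne n 0 with rfl | hn
  · simp
  · rw [cesaroMean, nsmul_inv_natCast_smul hn]

theorem cesaroMean_add (f g : ℕ → E) (n : ℕ) :
    cesaroMean (fun k => f k + g k) n = cesaroMean f n + cesaroMean g n := by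
  simp only [cesaroMean, sum_add_distrib, smul_add]

theorem cesaroMean_nsmul (t : ℕ) (f : ℕ → E) (n : ℕ) :
    cesaroMean (fun k => t • f k) n = t • cesaroMean f n := by
  simp only [cesaroMean, ← smul_sum, smul_comm (n : ℝ)⁻¹ t]

variable [Lattice E] {f g : ℕ → E}

theorem cesaroMean_add_const_le {c : E} (hc : 0 ≤ c) (n : ℕ) :
    cesaroMean (fun k => f k + c) n ≤ cesaroMean f n + c := by
  rcases eq_or_ne n 0 with rfl | hn
  · simpa [cesaroMean] using hc
  · rw [cesaroMean_add, cesaroMean, cesaroMean, sum_const, card_range,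
      inv_natCast_smul_nsmul hn]

variable [AddLeftMono E]

theorem cesaroMean_mono (h : ∀ k, f k ≤ g k) (n : ℕ) : cesaroMean f n ≤ cesaroMean g n :=
  inv_natCast_smul_mono n (sum_le_sum fun k _ => h k)

theorem cesaroMean_nonneg (hf : ∀ k, 0 ≤ f k) (n : ℕ) : 0 ≤ cesaroMean f n :=
  inv_natCast_smul_nonneg n (sum_nonneg fun k _ => hf k)

theorem cesaroMean_le {b : E} (hb : 0 ≤ b) (hf : ∀ k, f k ≤ b) (n : ℕ) :
    cesaroMean f n ≤ b := by
  rcases eq_or_ne n 0 with rfl | hn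
  · simpa [cesaroMean] using hb
  · rw [cesaroMean, inv_natCast_smul_le_iff hn]
    simpa using sum_le_card_nsmul (range n) f b fun k _ => hf k

end CesaroMean

theorem isGLB_range_of_le {E ι : Type*} [Preorder E] [Zero E] {c c' : ι → E}
    (h₀ : ∀ i, 0 ≤ c i) (h : ∀ i, c i ≤ c' i) (hc' : IsGLB (Set.range c') 0) :
    IsGLB (Set.range c) 0 :=
  ⟨Set.forall_mem_range.2 h₀, fun _ ha =>
    hc'.2 <| Set.forall_mem_range.2 fun i => (ha ⟨i, rfl⟩).trans (h i)⟩

section TailSup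

variable {E : Type*} [ConditionallyCompleteLattice E] {x : ℕ → E} {N n : ℕ}

noncomputable def tailSup (x : ℕ → E) (N : ℕ) : E := sSup (x '' Set.Ici N)

theorem le_tailSup (hx : BddAbove (Set.range x)) (h : N ≤ n) : x n ≤ tailSup x N :=
  le_csSup (hx.mono (Set.image_subset_range _ _)) ⟨n, h, rfl⟩

theorem tailSup_le {c : E} (h : ∀ n ≥ N, x n ≤ c) : tailSup x N ≤ c :=
  csSup_le ⟨x N, N, Set.mem_Ici.2 le_rfl, rfl⟩ (by rintro _ ⟨n, hn, rfl⟩; exact h n hn)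

theorem antitone_tailSup (hx : BddAbove (Set.range x)) : Antitone (tailSup x) :=
  fun _ _ hMN => tailSup_le fun _ hn => le_tailSup hx (hMN.trans hn)

end TailSup

section OrderConvergence

variable {E : Type*} [ConditionallyCompleteLattice E] [AddCommGroup E] [AddLeftMono E]

theorem IsGLB.le_of_forall_le_add {ι : Type*} {c : ι → E} (hc : IsGLB (Set.range c) 0)
    {a b : E} (h : ∀ i, a ≤ b + c i) : a ≤ b :=
  sub_nonpos.1 <| hc.2 <| Set.forall_mem_range.2 fun i => sub_le_iff_le_add'.2 (h i)

theorem orderConvergesTo_const (a : E) : OrderConvergesTo (fun _ => a) a :=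
  ⟨fun _ => 0, antitone_const, by simp, fun _ => ⟨0, fun _ _ => by simp⟩⟩

theorem OrderConvergesTo.add {x y : ℕ → E} {a b : E} (hx : OrderConvergesTo x a)
    (hy : OrderConvergesTo y b) : OrderConvergesTo (fun n => x n + y n) (a + b) := by
  obtain ⟨u, hu, hu0, hux⟩ := hx
  obtain ⟨v, hv, hv0, hvy⟩ := hy
  refine ⟨fun m => u m + v m, hu.add hv, ⟨?_, fun c hc => ?_⟩, fun m => ?_⟩
  · exact Set.forall_mem_range.2 fun m => add_nonneg (hu0.1 ⟨m, rfl⟩) (hv0.1 ⟨m, rfl⟩)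
  · have hck : ∀ k, c ≤ v k := fun k => sub_nonpos.1 <| hu0.2 <|
      Set.forall_mem_range.2 fun m => sub_le_iff_le_add.2 <| (hc ⟨max k m, rfl⟩).trans <|
        add_le_add (hu (le_max_right k m)) (hv (le_max_left k m))
    exact hv0.2 (Set.forall_mem_range.2 hck)
  · obtain ⟨N₁, h₁⟩ := hux m
    obtain ⟨N₂, h₂⟩ := hvy m
    refine ⟨max N₁ N₂, fun n hn => ?_⟩
    calc |x n + y n - (a + b)| = |(x n - a) + (y n - b)| := by congr 1; abel
      _ ≤ |x n - a| + |y n - b| := abs_add_le _ _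
      _ ≤ u m + v m :=
        add_le_add (h₁ n (le_of_max_le_left hn)) (h₂ n (le_of_max_le_right hn))

theorem OrderConvergesTo.nsmul {x : ℕ → E} {a : E} (hx : OrderConvergesTo x a) (k : ℕ) :
    OrderConvergesTo (fun n => k • x n) (k • a) := by
  induction k with
  | zero => simpa using orderConvergesTo_const (0 : E)
  | succ k ih => simpa only [succ_nsmul] using ih.add hx

theorem orderConvergesTo_squeeze_zero {x y : ℕ → E} (hx : ∀ n, 0 ≤ x n) (hxy : ∀ n, x n ≤ y n)
    (hy : OrderConvergesTo y 0) : OrderConvergesTo x 0 := by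
  obtain ⟨u, hu, hu0, huy⟩ := hy
  refine ⟨u, hu, hu0, fun m => ?_⟩
  obtain ⟨N, hN⟩ := huy m
  refine ⟨N, fun n hn => ?_⟩
  rw [sub_zero, abs_of_nonneg (hx n)]
  exact (hxy n).trans ((le_abs_self _).trans (by simpa using hN n hn))

theorem OrderConvergesTo.isGLB_range_tailSup {x : ℕ → E} (hx0 : ∀ n, 0 ≤ x n)
    (hx : BddAbove (Set.range x)) (h : OrderConvergesTo x 0) : IsGLB (Set.range (tailSup x)) 0 := by
  obtain ⟨u, -, hu0, hux⟩ := h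
  refine ⟨Set.forall_mem_range.2 fun N => (hx0 N).trans (le_tailSup hx le_rfl), fun c hc => ?_⟩
  refine hu0.2 (Set.forall_mem_range.2 fun m => ?_)
  obtain ⟨N, hN⟩ := hux m
  refine (hc ⟨N, rfl⟩).trans (tailSup_le fun n hn => ?_)
  simpa [abs_of_nonneg (hx0 n)] using hN n hn

theorem orderConvergesTo_zero_of_forall_eventually_le {x : ℕ → E} (hx0 : ∀ n, 0 ≤ x n)
    (hx : BddAbove (Set.range x)) {ι : Type*} {c : ι → E} (hc : IsGLB (Set.range c) 0)
    (h : ∀ i, ∃ y : ℕ → E, OrderConvergesTo y 0 ∧ ∃ N, ∀ n ≥ N, x n ≤ y n + c i) :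
    OrderConvergesTo x 0 := by
  refine ⟨tailSup x, antitone_tailSup hx, ⟨?_, fun a ha => ?_⟩, fun m => ⟨m, fun n hn => ?_⟩⟩
  · exact Set.forall_mem_range.2 fun N => (hx0 N).trans (le_tailSup hx le_rfl)
  · refine hc.2 (Set.forall_mem_range.2 fun i => ?_)
    obtain ⟨y, ⟨v, -, hv0, hvy⟩, N, hN⟩ := h i
    refine hv0.le_of_forall_le_add fun m => ?_
    obtain ⟨N', hN'⟩ := hvy m
    refine (ha ⟨max N N', rfl⟩).trans <|
      tailSup_le fun n hn => (hN n (le_of_max_le_left hn)).trans ?_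
    rw [add_comm]
    gcongr
    simpa using (le_abs_self _).trans (hN' n (le_of_max_le_right hn))
  · simpa [abs_of_nonneg (hx0 n)] using le_tailSup hx hn

end OrderConvergence

section Scalars

variable {E : Type*} [ConditionallyCompleteLattice E] [AddCommGroup E] [AddLeftMono E]
  [Module ℝ E]

theorem isGLB_range_nsmul {c : ℕ → E} (hc : IsGLB (Set.range c) 0) (k : ℕ) :
    IsGLB (Set.range fun i => k • c i) 0 := by
  rcases eq_or_ne k 0 with rfl | hk
  · simp
  refine ⟨Set.forall_mem_range.2 fun i => nsmul_nonneg (hc.1 ⟨i, rfl⟩) k, fun a ha => ?_⟩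
  have : (k : ℝ)⁻¹ • a ≤ 0 :=
    hc.2 (Set.forall_mem_range.2 fun i => (inv_natCast_smul_le_iff hk).2 (ha ⟨i, rfl⟩))
  rwa [inv_natCast_smul_le_iff hk, smul_zero] at this

theorem isGLB_range_inv_natCast_succ_smul {a : E} (ha : 0 ≤ a) :
    IsGLB (Set.range fun m : ℕ => ((m + 1 : ℕ) : ℝ)⁻¹ • a) 0 := by
  refine ⟨Set.forall_mem_range.2 fun m => inv_natCast_smul_nonneg _ ha, fun c hc => ?_⟩
  refine nonpos_of_forall_nsmul_le (c := a) fun n => ?_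
  cases n with
  | zero => simpa using ha
  | succ m => exact (le_inv_natCast_smul_iff m.succ_ne_zero).1 (hc ⟨m, rfl⟩)

theorem orderConvergesTo_inv_natCast_smul {a : E} (ha : 0 ≤ a) :
    OrderConvergesTo (fun n => (n : ℝ)⁻¹ • a) 0 := by
  refine ⟨fun m => ((m + 1 : ℕ) : ℝ)⁻¹ • a,
    fun m m' h => inv_natCast_smul_le_inv_natCast_smul m.succ_ne_zero (by omega) ha,
    isGLB_range_inv_natCast_succ_smul ha, fun m => ⟨m + 1, fun n hn => ?_⟩⟩
  rw [sub_zero, abs_of_nonneg (inv_natCast_smul_nonneg n ha)]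
  exact inv_natCast_smul_le_inv_natCast_smul m.succ_ne_zero hn ha

theorem isGLB_range_inv_natCast_succ_smul_add {e : E} (he : 0 ≤ e) {u : ℕ → ℕ → E}
    (hu : ∀ i, IsGLB (Set.range (u i)) 0) :
    IsGLB (Set.range fun iM : ℕ × ℕ => ((iM.1 + 1 : ℕ) : ℝ)⁻¹ • e + u iM.1 iM.2) 0 := by
  refine ⟨Set.forall_mem_range.2 fun iM =>
    add_nonneg (inv_natCast_smul_nonneg _ he) ((hu iM.1).1 ⟨iM.2, rfl⟩), fun a ha => ?_⟩
  refine (isGLB_range_inv_natCast_succ_smul he).2 (Set.forall_mem_range.2 fun i => ?_)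
  exact (hu i).le_of_forall_le_add fun M => ha ⟨(i, M), rfl⟩

theorem OrderConvergesTo.cesaro {x : ℕ → E} {b : E} (hx0 : ∀ n, 0 ≤ x n) (hxb : ∀ n, x n ≤ b)
    (hx : OrderConvergesTo x 0) : OrderConvergesTo (cesaroMean x) 0 := by
  have hb : 0 ≤ b := (hx0 0).trans (hxb 0)
  obtain ⟨v, -, hv0, hvx⟩ := hx
  refine orderConvergesTo_zero_of_forall_eventually_le (cesaroMean_nonneg hx0)
    ⟨b, Set.forall_mem_range.2 (cesaroMean_le hb hxb)⟩ hv0 fun m => ?_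
  obtain ⟨N, hN⟩ := hvx m
  refine ⟨fun n => (n : ℝ)⁻¹ • (N • b), orderConvergesTo_inv_natCast_smul (nsmul_nonneg hb N),
    N, fun n hn => ?_⟩
  rcases eq_or_ne n 0 with rfl | hn0
  · simpa [cesaroMean] using hv0.1 ⟨m, rfl⟩
  rw [cesaroMean, inv_natCast_smul_le_iff hn0, nsmul_add, nsmul_inv_natCast_smul hn0,
    ← sum_range_add_sum_Ico x hn]
  gcongr
  · simpa using sum_le_card_nsmul (range N) x b fun k _ => hxb k
  · calc ∑ k ∈ Ico N n, x k ≤ ∑ _k ∈ Ico N n, v m :=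
          sum_le_sum fun k hk => by simpa [abs_of_nonneg (hx0 k)] using hN k (mem_Ico.1 hk).1
      _ ≤ n • v m := by
          rw [sum_const, Nat.card_Ico]
          exact nsmul_le_nsmul_left (hv0.1 ⟨m, rfl⟩) (Nat.sub_le n N)

end Scalars

section BandProjection

variable {E : Type*} [ConditionallyCompleteLattice E] [AddCommGroup E] [Module ℝ E]

theorem bandProj_eq_sSup_nsmul (p f : E) :
    bandProj p f = sSup (Set.range fun n : ℕ => f ⊓ n • p) := by
  simp only [bandProj, Nat.cast_smul_eq_nsmul]

theorem inf_nsmul_le_bandProj (p f : E) (n : ℕ) : f ⊓ n • p ≤ bandProj p f := by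
  rw [bandProj_eq_sSup_nsmul]
  exact le_csSup ⟨f, Set.forall_mem_range.2 fun _ => inf_le_left⟩ ⟨n, rfl⟩

theorem bandProj_le_of_forall {p f a : E} (h : ∀ n : ℕ, f ⊓ n • p ≤ a) : bandProj p f ≤ a := by
  rw [bandProj_eq_sSup_nsmul]
  exact csSup_le (Set.range_nonempty _) (Set.forall_mem_range.2 h)

theorem bandProj_le_self (p f : E) : bandProj p f ≤ f :=
  bandProj_le_of_forall fun _ => inf_le_left

theorem bandProj_nonneg (p : E) {f : E} (hf : 0 ≤ f) : 0 ≤ bandProj p f := by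
  simpa [hf] using inf_nsmul_le_bandProj p f 0

theorem bandProj_mono_right (p : E) {f g : E} (h : f ≤ g) : bandProj p f ≤ bandProj p g :=
  bandProj_le_of_forall fun n => (inf_le_inf_right _ h).trans (inf_nsmul_le_bandProj p g n)

variable [AddLeftMono E]

theorem bandProj_mono_left {p q : E} (h : p ≤ q) (f : E) : bandProj p f ≤ bandProj q f :=
  bandProj_le_of_forall fun n =>
    (inf_le_inf_left f (nsmul_le_nsmul_right h n)).trans (inf_nsmul_le_bandProj q f n)

theorem bandProj_add_left_le {c d f : E} (hc : 0 ≤ c) (hd : 0 ≤ d) (hf : 0 ≤ f) :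
    bandProj (c + d) f ≤ bandProj c f + bandProj d f :=
  bandProj_le_of_forall fun n => by
    rw [nsmul_add]
    exact (inf_add_le_add_inf hf (nsmul_nonneg hc n) (nsmul_nonneg hd n)).trans
      (add_le_add (inf_nsmul_le_bandProj c f n) (inf_nsmul_le_bandProj d f n))

theorem inf_bandProj_eq_zero {a g f : E} (ha : 0 ≤ a) (hg : 0 ≤ g) (hf : 0 ≤ f)
    (h : a ⊓ g = 0) : a ⊓ bandProj g f = 0 := by
  refine le_antisymm ?_ (le_inf ha (bandProj_nonneg g hf))
  rw [bandProj_eq_sSup_nsmul]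
  refine inf_csSup_le (Set.range_nonempty _) ⟨f, Set.forall_mem_range.2 fun _ => inf_le_left⟩
    (Set.forall_mem_range.2 fun n => ?_)
  rw [← inf_nsmul_eq_zero ha hg h n]
  exact inf_le_inf_left a inf_le_right

theorem sub_bandProj_inf_eq_zero {e g : E} (hg : 0 ≤ g) :
    (e - bandProj g e) ⊓ g = 0 := by
  set q := bandProj g e
  set t := (e - q) ⊓ g
  have ht : 0 ≤ t := le_inf (sub_nonneg.2 (bandProj_le_self g e)) hg
  -- `t` can be added to every `e ⊓ k • g` without leaving the set whose supremum is `q`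
  have hq : q ≤ q - t := bandProj_le_of_forall fun k => le_sub_iff_add_le.2 <|
    calc e ⊓ k • g + t ≤ e ⊓ (k + 1) • g := by
          refine le_inf ?_ ?_
          · calc e ⊓ k • g + t ≤ q + (e - q) :=
                  add_le_add (inf_nsmul_le_bandProj g e k) inf_le_left
              _ = e := add_sub_cancel q e
          · rw [succ_nsmul]
            exact add_le_add inf_le_right inf_le_right
      _ ≤ q := inf_nsmul_le_bandProj g e (k + 1)
  exact le_antisymm (by simpa using hq) ht

theorem isComponent_bandProj {e g : E} (he : 0 ≤ e) (hg : 0 ≤ g) :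
    IsComponent e (bandProj g e) := by
  refine ⟨bandProj_nonneg g he, bandProj_le_self g e, ?_⟩
  rw [inf_comm]
  exact inf_bandProj_eq_zero (sub_nonneg.2 (bandProj_le_self g e)) hg he
    (sub_bandProj_inf_eq_zero hg)

theorem bandProj_posPart_sub_le {e h : E} (he : 0 ≤ e) (hh : 0 ≤ h) :
    bandProj (h - e)⁺ e ≤ h := by
  set q := bandProj (h - e)⁺ e
  have hdisj : (e - h)⁺ ⊓ q = 0 := by
    refine inf_bandProj_eq_zero (posPart_nonneg _) (posPart_nonneg _) he ?_
    rw [inf_comm, ← neg_sub h e, posPart_neg]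
    exact posPart_inf_negPart_eq_zero _
  have hle : (q - h)⁺ ≤ (e - h)⁺ ⊓ q :=
    le_inf (posPart_mono (sub_le_sub_right (bandProj_le_self _ e) h))
      (sup_le (sub_le_self q hh) (bandProj_nonneg _ he))
  rw [hdisj] at hle
  exact sub_nonpos.1 ((le_posPart _).trans hle)

end BandProjection

section Components

variable {E : Type*} [ConditionallyCompleteLattice E] [AddCommGroup E] [AddLeftMono E]
  {e c d : E}

theorem IsComponent.sub (hc : IsComponent e c) : IsComponent e (e - c) :=
  ⟨sub_nonneg.2 hc.2.1, sub_le_self e hc.1, by rw [sub_sub_cancel, inf_comm]; exact hc.2.2⟩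

theorem IsComponent.inf (hc : IsComponent e c) (hd : IsComponent e d) :
    IsComponent e (c ⊓ d) := by
  obtain ⟨hc0, hce, hcd⟩ := hc
  obtain ⟨hd0, hde, hdd⟩ := hd
  refine ⟨le_inf hc0 hd0, inf_le_left.trans hce, le_antisymm ?_ (le_inf (le_inf hc0 hd0)
    (sub_nonneg.2 (inf_le_left.trans hce)))⟩
  calc c ⊓ d ⊓ (e - c ⊓ d) ≤ c ⊓ d ⊓ ((e - c) + (e - d)) := by
        rw [sub_inf]
        exact inf_le_inf_left _ (sup_le (le_add_of_nonneg_right (sub_nonneg.2 hde))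
          (le_add_of_nonneg_left (sub_nonneg.2 hce)))
    _ ≤ c ⊓ d ⊓ (e - c) + c ⊓ d ⊓ (e - d) :=
        inf_add_le_add_inf (le_inf hc0 hd0) (sub_nonneg.2 hce) (sub_nonneg.2 hde)
    _ ≤ c ⊓ (e - c) + d ⊓ (e - d) :=
        add_le_add (inf_le_inf_right _ inf_le_left) (inf_le_inf_right _ inf_le_right)
    _ = 0 := by rw [hcd, hdd, add_zero]

theorem IsComponent.sup (hc : IsComponent e c) (hd : IsComponent e d) :
    IsComponent e (c ⊔ d) := by
  simpa [sub_inf] using (hc.sub.inf hd.sub).sub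

theorem IsComponent.nsmul_inf_nsmul_le (hc : IsComponent e c) (t n : ℕ) :
    t • e ⊓ n • c ≤ t • c := by
  obtain ⟨hc0, hce, hcd⟩ := hc
  calc t • e ⊓ n • c = n • c ⊓ (t • c + t • (e - c)) := by
        rw [← nsmul_add, add_sub_cancel, inf_comm]
    _ ≤ n • c ⊓ t • c + n • c ⊓ t • (e - c) :=
        inf_add_le_add_inf (nsmul_nonneg hc0 n) (nsmul_nonneg hc0 t)
          (nsmul_nonneg (sub_nonneg.2 hce) t)
    _ ≤ t • c := by
        rw [nsmul_inf_nsmul_eq_zero hc0 (sub_nonneg.2 hce) hcd n t, add_zero]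
        exact inf_le_right

end Components

section WeakUnit

variable {E : Type*} [ConditionallyCompleteLattice E] [AddCommGroup E] [AddLeftMono E]
  {e : E}

theorem sum_range_posPart_sub_nsmul_inf_le (he : 0 ≤ e) (b : E) (n : ℕ) :
    ∑ t ∈ range n, (b - t • e)⁺ ⊓ e ≤ b⁺ := by
  have hstep : ∀ t : ℕ, (b - t • e)⁺ ⊓ e = (b - t • e)⁺ - (b - (t + 1) • e)⁺ := fun t => by
    rw [posPart_inf_eq_sub _ he, succ_nsmul, sub_add_eq_sub_sub]
  rw [sum_congr rfl fun t _ => hstep t, sum_range_sub' (fun t : ℕ => (b - t • e)⁺), zero_smul,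
    sub_zero]
  exact sub_le_self _ (posPart_nonneg _)

theorem isGLB_range_posPart_sub_nsmul (he : 0 ≤ e) (hwu : ∀ x : E, e ⊓ |x| = 0 → x = 0)
    (b : E) :
    IsGLB (Set.range fun t : ℕ => (b - t • e)⁺) 0 := by
  refine ⟨Set.forall_mem_range.2 fun t => posPart_nonneg _, fun a ha => ?_⟩
  have hae : ∀ t : ℕ, a⁺ ⊓ e ≤ (b - t • e)⁺ ⊓ e := fun t =>
    inf_le_inf_right e (sup_le (ha ⟨t, rfl⟩) (posPart_nonneg _))
  -- the telescoping bound makes `a⁺ ⊓ e` infinitely small with respect to `b⁺`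
  have hzero : a⁺ ⊓ e ≤ 0 := nonpos_of_forall_nsmul_le fun n =>
    calc n • (a⁺ ⊓ e) = ∑ _t ∈ range n, a⁺ ⊓ e := by simp
      _ ≤ ∑ t ∈ range n, (b - t • e)⁺ ⊓ e := sum_le_sum fun t _ => hae t
      _ ≤ b⁺ := sum_range_posPart_sub_nsmul_inf_le he b n
  have : a⁺ = 0 := hwu _ <| by
    rw [abs_of_nonneg (posPart_nonneg a), inf_comm]
    exact le_antisymm hzero (le_inf (posPart_nonneg a) he)
  exact (le_posPart a).trans this.le

variable [Module ℝ E]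

theorem bandProj_le_nsmul_add_posPart {c b : E} (hc : IsComponent e c) (hb : 0 ≤ b) (t : ℕ) :
    bandProj c b ≤ t • c + (b - t • e)⁺ :=
  bandProj_le_of_forall fun n =>
    calc b ⊓ n • c ≤ t • e ⊓ n • c + (b - t • e)⁺ ⊓ n • c :=
          inf_le_inf_add_posPart_sub_inf hb (nsmul_nonneg (hc.1.trans hc.2.1) t)
            (nsmul_nonneg hc.1 n)
      _ ≤ t • c + (b - t • e)⁺ := add_le_add (hc.nsmul_inf_nsmul_le t n) inf_le_left

theorem le_bandProj_add_bandProj_sub (he : 0 ≤ e) (hwu : ∀ x : E, e ⊓ |x| = 0 → x = 0)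
    {c f : E} (hc : 0 ≤ c) (hce : c ≤ e) (hf : 0 ≤ f) : f ≤ bandProj c f + bandProj (e - c) f :=
  (isGLB_range_posPart_sub_nsmul he hwu f).le_of_forall_le_add fun m =>
    calc f = f ⊓ (m • c + m • (e - c)) + (f - m • e)⁺ := by
          rw [← nsmul_add, add_sub_cancel, inf_add_posPart_sub]
      _ ≤ f ⊓ m • c + f ⊓ m • (e - c) + (f - m • e)⁺ := by
          gcongr
          exact inf_add_le_add_inf hf (nsmul_nonneg hc m) (nsmul_nonneg (sub_nonneg.2 hce) m)
      _ ≤ bandProj c f + bandProj (e - c) f + (f - m • e)⁺ := by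
          gcongr <;> exact inf_nsmul_le_bandProj _ _ _

theorem isGLB_range_bandProj (he : 0 ≤ e) (hwu : ∀ x : E, e ⊓ |x| = 0 → x = 0) {c : ℕ → E}
    (hc : ∀ M, IsComponent e (c M)) (hc0 : IsGLB (Set.range c) 0) {b : E} (hb : 0 ≤ b) :
    IsGLB (Set.range fun M => bandProj (c M) b) 0 := by
  refine ⟨Set.forall_mem_range.2 fun M => bandProj_nonneg _ hb, fun a ha => ?_⟩
  refine (isGLB_range_posPart_sub_nsmul he hwu b).2 (Set.forall_mem_range.2 fun t => ?_)
  refine (isGLB_range_nsmul hc0 t).le_of_forall_le_add fun M => ?_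
  rw [add_comm]
  exact (ha ⟨M, rfl⟩).trans (bandProj_le_nsmul_add_posPart (hc M) hb t)

end WeakUnit

section Backward

variable {E : Type*} [ConditionallyCompleteLattice E] [AddCommGroup E] [AddLeftMono E]
  [Module ℝ E]

theorem orderConvergesTo_cesaroMean_of_densityZero {e b : E} {f p : ℕ → E} (he : 0 ≤ e)
    (hwu : ∀ x : E, e ⊓ |x| = 0 → x = 0) (hf0 : ∀ n, 0 ≤ f n) (hfb : ∀ n, f n ≤ b)
    (hp : ∀ n, IsComponent e (p n)) (hdens : DensityZero p)
    (hconv : OrderConvergesTo (fun n => bandProj (e - p n) (f n)) 0) :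
    OrderConvergesTo (cesaroMean f) 0 := by
  have hb : 0 ≤ b := (hf0 0).trans (hfb 0)
  have hp' : OrderConvergesTo (cesaroMean p) 0 := hdens
  set h := fun n => bandProj (e - p n) (f n)
  have hh : OrderConvergesTo (cesaroMean h) 0 :=
    hconv.cesaro (fun n => bandProj_nonneg _ (hf0 n)) fun n =>
      (bandProj_le_self _ _).trans (hfb n)
  refine orderConvergesTo_zero_of_forall_eventually_le (cesaroMean_nonneg hf0)
    ⟨b, Set.forall_mem_range.2 (cesaroMean_le hb hfb)⟩ (isGLB_range_posPart_sub_nsmul he hwu b)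
    fun t => ⟨fun n => t • cesaroMean p n + cesaroMean h n,
      by simpa using (hp'.nsmul t).add hh, 0, fun n _ => ?_⟩
  have hfk : ∀ k, f k ≤ t • p k + h k + (b - t • e)⁺ := fun k =>
    calc f k ≤ bandProj (p k) (f k) + h k :=
          le_bandProj_add_bandProj_sub he hwu (hp k).1 (hp k).2.1 (hf0 k)
      _ ≤ t • p k + (b - t • e)⁺ + h k := by
          gcongr
          exact (bandProj_mono_right _ (hfb k)).trans (bandProj_le_nsmul_add_posPart (hp k) hb t)
      _ = t • p k + h k + (b - t • e)⁺ := by abel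
  calc cesaroMean f n ≤ cesaroMean (fun k => t • p k + h k + (b - t • e)⁺) n :=
        cesaroMean_mono hfk n
    _ ≤ cesaroMean (fun k => t • p k + h k) n + (b - t • e)⁺ :=
        cesaroMean_add_const_le (posPart_nonneg _) n
    _ = t • cesaroMean p n + cesaroMean h n + (b - t • e)⁺ := by
        rw [cesaroMean_add, cesaroMean_nsmul]

end Backward

namespace KoopmanVonNeumann

variable {E : Type*} [ConditionallyCompleteLattice E] [AddCommGroup E] [AddLeftMono E]
  [Module ℝ E]

section Definitions

variable (e : E) (f : ℕ → E)

/-- The component of `e` on which `f n > e / (j + 1)`. -/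
noncomputable def exceedComponent (j n : ℕ) : E := bandProj ((j + 1) • f n - e)⁺ e

noncomputable def tailDensity (j : ℕ) : ℕ → E := tailSup (cesaroMean (exceedComponent e f j))

/-- The component of `e` on which, from time `m` on, the Cesàro means of the level-`j`
exceedances stay below `e / 2 ^ (j + 1)`. -/
noncomputable def sparseComponent (j m : ℕ) : E :=
  e - bandProj (2 ^ (j + 1) • tailDensity e f j m - e)⁺ e

/-- Off this component, `f n ≤ e / (j + 1)` on the sparse component of every level `j ≤ n`
at time `n`. -/
noncomputable def exceptionalComponent (n : ℕ) : E :=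
  partialSups (fun j => exceedComponent e f j n ⊓ sparseComponent e f j n) n

end Definitions

variable {e : E} {f : ℕ → E}

theorem isComponent_exceedComponent (he : 0 ≤ e) (j n : ℕ) :
    IsComponent e (exceedComponent e f j n) :=
  isComponent_bandProj he (posPart_nonneg _)

theorem exceedComponent_le (he : 0 ≤ e) (hf0 : ∀ n, 0 ≤ f n) (j n : ℕ) :
    exceedComponent e f j n ≤ (j + 1) • f n :=
  bandProj_posPart_sub_le he (nsmul_nonneg (hf0 n) _)

theorem exceedComponent_mono (hf0 : ∀ n, 0 ≤ f n) {i j : ℕ} (hij : i ≤ j) (n : ℕ) :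
    exceedComponent e f i n ≤ exceedComponent e f j n :=
  bandProj_mono_left
    (posPart_mono (sub_le_sub_right (nsmul_le_nsmul_left (hf0 n) (by omega)) e)) e

theorem bandProj_sub_exceedComponent_le (he : 0 ≤ e) (hf0 : ∀ n, 0 ≤ f n) (j n : ℕ) :
    bandProj (e - exceedComponent e f j n) (f n) ≤ ((j + 1 : ℕ) : ℝ)⁻¹ • e := by
  have hq := isComponent_exceedComponent (f := f) he j n
  refine bandProj_le_of_forall fun k => (le_inv_natCast_smul_iff j.succ_ne_zero).2 ?_
  calc (j + 1) • (f n ⊓ k • (e - exceedComponent e f j n))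
      ≤ (j + 1) • f n ⊓ ((j + 1) * k) • (e - exceedComponent e f j n) := by
        rw [mul_nsmul']
        exact le_inf (nsmul_le_nsmul_right inf_le_left _) (nsmul_le_nsmul_right inf_le_right _)
    _ ≤ e := inf_nsmul_le_of_posPart_sub_inf_eq_zero (nsmul_nonneg (hf0 n) _) he hq.sub.1
        (by rw [inf_comm]; exact sub_bandProj_inf_eq_zero (posPart_nonneg _)) _

theorem cesaroMean_exceedComponent_le (he : 0 ≤ e) (j n : ℕ) :
    cesaroMean (exceedComponent e f j) n ≤ e :=
  cesaroMean_le he (fun k => (isComponent_exceedComponent he j k).2.1) n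

theorem antitone_tailDensity (he : 0 ≤ e) (j : ℕ) : Antitone (tailDensity e f j) :=
  antitone_tailSup ⟨e, Set.forall_mem_range.2 (cesaroMean_exceedComponent_le he j)⟩

theorem isGLB_range_tailDensity (he : 0 ≤ e) (hf0 : ∀ n, 0 ≤ f n)
    (hmean : OrderConvergesTo (cesaroMean f) 0) (j : ℕ) :
    IsGLB (Set.range (tailDensity e f j)) 0 := by
  have hq0 := cesaroMean_nonneg fun k => (isComponent_exceedComponent (f := f) he j k).1
  refine OrderConvergesTo.isGLB_range_tailSup hq0
    ⟨e, Set.forall_mem_range.2 (cesaroMean_exceedComponent_le he j)⟩ ?_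
  refine orderConvergesTo_squeeze_zero hq0 (fun n => ?_) (by simpa using hmean.nsmul (j + 1))
  rw [← cesaroMean_nsmul]
  exact cesaroMean_mono (exceedComponent_le he hf0 j) n

theorem isComponent_sparseComponent (he : 0 ≤ e) (j m : ℕ) :
    IsComponent e (sparseComponent e f j m) :=
  (isComponent_bandProj he (posPart_nonneg _)).sub

theorem sparseComponent_inf_eq_zero (j m : ℕ) :
    sparseComponent e f j m ⊓ (2 ^ (j + 1) • tailDensity e f j m - e)⁺ = 0 :=
  sub_bandProj_inf_eq_zero (posPart_nonneg _)

theorem monotone_sparseComponent (he : 0 ≤ e) (j : ℕ) : Monotone (sparseComponent e f j) :=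
  fun _ _ h => sub_le_sub_left (bandProj_mono_left (posPart_mono (sub_le_sub_right
    (nsmul_le_nsmul_right (antitone_tailDensity he j h) _) e)) e) e

theorem isGLB_range_sub_sparseComponent (he : 0 ≤ e) (hf0 : ∀ n, 0 ≤ f n)
    (hmean : OrderConvergesTo (cesaroMean f) 0) (i : ℕ) :
    IsGLB (Set.range fun M => e - sparseComponent e f i M) 0 := by
  refine isGLB_range_of_le (fun M => (isComponent_sparseComponent he i M).sub.1) (fun M => ?_)
    (isGLB_range_nsmul (isGLB_range_tailDensity he hf0 hmean i) (2 ^ (i + 1)))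
  rw [sparseComponent, sub_sub_cancel]
  exact bandProj_posPart_sub_le he
    (nsmul_nonneg ((isGLB_range_tailDensity he hf0 hmean i).1 ⟨M, rfl⟩) _)

theorem two_pow_nsmul_sum_inf_sparseComponent_le (he : 0 ≤ e) (j n : ℕ) :
    2 ^ (j + 1) • ∑ k ∈ range n, exceedComponent e f j k ⊓ sparseComponent e f j n ≤ n • e := by
  -- `2 ^ (j + 1) • w ≤ e` on `d`, while the level-`j` exceedances up to time `n` add up to at
  -- most `n • w`
  set d := sparseComponent e f j n
  set w := tailDensity e f j n
  have hd := isComponent_sparseComponent (f := f) he j n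
  have hw : cesaroMean (exceedComponent e f j) n ≤ w :=
    le_tailSup ⟨e, Set.forall_mem_range.2 (cesaroMean_exceedComponent_le he j)⟩ le_rfl
  have hw0 : 0 ≤ w :=
    (cesaroMean_nonneg (fun k => (isComponent_exceedComponent he j k).1) n).trans hw
  have hS : ∑ k ∈ range n, exceedComponent e f j k ⊓ d ≤ n • w :=
    (sum_le_sum fun k _ => inf_le_left).trans
      ((sum_range_eq_nsmul_cesaroMean _ n).trans_le (nsmul_le_nsmul_right hw n))
  have hS' : ∑ k ∈ range n, exceedComponent e f j k ⊓ d ≤ n • d := by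
    simpa using sum_le_card_nsmul (range n) _ d fun k _ => inf_le_right
  have hdisj : (n • (2 ^ (j + 1) • w) - n • e)⁺ ⊓ d = 0 := by
    refine inf_eq_zero_of_le (posPart_nonneg _) hd.1 ?_ le_rfl
      (inf_comm d _ ▸
        inf_nsmul_eq_zero hd.1 (posPart_nonneg _) (sparseComponent_inf_eq_zero j n) n)
    rw [← nsmul_sub]
    exact sup_le (nsmul_le_nsmul_right (le_posPart _) n) (nsmul_nonneg (posPart_nonneg _) n)
  calc 2 ^ (j + 1) • ∑ k ∈ range n, exceedComponent e f j k ⊓ d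
      ≤ n • (2 ^ (j + 1) • w) ⊓ (2 ^ (j + 1) * n) • d := by
        rw [smul_comm n, mul_nsmul']
        exact le_inf (nsmul_le_nsmul_right hS _) (nsmul_le_nsmul_right hS' _)
    _ ≤ n • e := inf_nsmul_le_of_posPart_sub_inf_eq_zero
        (nsmul_nonneg (nsmul_nonneg hw0 _) n) (nsmul_nonneg he n) hd.1 hdisj _

theorem isComponent_exceptionalComponent (he : 0 ≤ e) (n : ℕ) :
    IsComponent e (exceptionalComponent e f n) := by
  have hcomp : ∀ j, IsComponent e (exceedComponent e f j n ⊓ sparseComponent e f j n) :=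
    fun j => (isComponent_exceedComponent he j n).inf (isComponent_sparseComponent he j n)
  suffices ∀ m, IsComponent e
      (partialSups (fun j => exceedComponent e f j n ⊓ sparseComponent e f j n) m) from this n
  intro m
  induction m with
  | zero => simpa using hcomp 0
  | succ m ih => simpa [partialSups_succ] using ih.sup (hcomp (m + 1))

theorem exceedComponent_inf_sparseComponent_le (he : 0 ≤ e) {i M n : ℕ} (hi : i ≤ n)
    (hM : M ≤ n) :
    exceedComponent e f i n ⊓ sparseComponent e f i M ≤ exceptionalComponent e f n :=
  (inf_le_inf_left _ (monotone_sparseComponent he i hM)).trans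
    (le_partialSups_of_le (fun j => exceedComponent e f j n ⊓ sparseComponent e f j n) hi)

theorem exceptionalComponent_le (he : 0 ≤ e) (hf0 : ∀ n, 0 ≤ f n) {i k M n : ℕ} (hk : k < n)
    (hi : i < n) (hM : M ≤ n) :
    exceptionalComponent e f k ≤
      ∑ j ∈ Ico i n, exceedComponent e f j k ⊓ sparseComponent e f j n +
        (e - sparseComponent e f i M) := by
  set D := sparseComponent e f i M
  set T := ∑ j ∈ Ico i n, exceedComponent e f j k ⊓ sparseComponent e f j n
  have hT : ∀ l ∈ Ico i n, exceedComponent e f l k ⊓ sparseComponent e f l n ≤ T :=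
    fun l hl => single_le_sum (fun j _ => le_inf (isComponent_exceedComponent he j k).1
      (isComponent_sparseComponent he j n).1) hl
  refine partialSups_le _ _ _ fun j hj => ?_
  set y := exceedComponent e f j k ⊓ sparseComponent e f j k
  have hyD : y ⊓ D ≤ T := by
    rcases le_or_gt i j with hij | hji
    · exact (inf_le_left.trans (inf_le_inf_left _ (monotone_sparseComponent he j hk.le))).trans
        (hT j (mem_Ico.2 ⟨hij, by omega⟩))
    · -- on `D`, the level `j < i` is dominated by the level `i`
      refine (le_inf ?_ ?_).trans (hT i (mem_Ico.2 ⟨le_rfl, hi⟩))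
      · exact inf_le_left.trans (inf_le_left.trans (exceedComponent_mono hf0 hji.le k))
      · exact inf_le_right.trans (monotone_sparseComponent he i hM)
  have hy : (y - D)⁺ ≤ e - D := by
    rw [← posPart_eq_self.2 (isComponent_sparseComponent he i M).sub.1]
    exact posPart_mono (sub_le_sub_right
      ((isComponent_exceedComponent he j k).inf (isComponent_sparseComponent he j k)).2.1 D)
  calc y = y ⊓ D + (y - D)⁺ := (inf_add_posPart_sub y D).symm
    _ ≤ T + (e - D) := add_le_add hyD hy

theorem cesaroMean_exceptionalComponent_le (he : 0 ≤ e) (hf0 : ∀ n, 0 ≤ f n) {i M n : ℕ}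
    (hi : i < n) (hM : M ≤ n) :
    cesaroMean (exceptionalComponent e f) n ≤
      ((i + 1 : ℕ) : ℝ)⁻¹ • e + (e - sparseComponent e f i M) := by
  have hn : n ≠ 0 := by omega
  set S := fun j => ∑ k ∈ range n, exceedComponent e f j k ⊓ sparseComponent e f j n
  have hS0 : 0 ≤ ∑ j ∈ Ico i n, S j := sum_nonneg fun j _ => sum_nonneg fun k _ =>
    le_inf (isComponent_exceedComponent he j k).1 (isComponent_sparseComponent he j n).1
  have hlevels : (i + 1) • ∑ j ∈ Ico i n, S j ≤ n • e :=
    (nsmul_le_nsmul_left hS0 Nat.lt_two_pow_self).trans <|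
      two_pow_nsmul_sum_Ico_le (nsmul_nonneg he n)
        (fun j => two_pow_nsmul_sum_inf_sparseComponent_le he j n) i n
  rw [cesaroMean, inv_natCast_smul_le_iff hn, nsmul_add, smul_comm]
  calc ∑ k ∈ range n, exceptionalComponent e f k
      ≤ ∑ k ∈ range n, (∑ j ∈ Ico i n, exceedComponent e f j k ⊓ sparseComponent e f j n +
          (e - sparseComponent e f i M)) :=
        sum_le_sum fun k hk => exceptionalComponent_le he hf0 (mem_range.1 hk) hi hM
    _ = ∑ j ∈ Ico i n, S j + n • (e - sparseComponent e f i M) := by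
        rw [sum_add_distrib, sum_comm, sum_const, card_range]
    _ ≤ ((i + 1 : ℕ) : ℝ)⁻¹ • (n • e) + n • (e - sparseComponent e f i M) := by
        gcongr
        exact (le_inv_natCast_smul_iff i.succ_ne_zero).2 hlevels

theorem bandProj_sub_exceptionalComponent_le (he : 0 ≤ e) (hf0 : ∀ n, 0 ≤ f n) {b : E}
    (hfb : ∀ n, f n ≤ b) {i M n : ℕ} (hi : i ≤ n) (hM : M ≤ n) :
    bandProj (e - exceptionalComponent e f n) (f n) ≤
      ((i + 1 : ℕ) : ℝ)⁻¹ • e + bandProj (e - sparseComponent e f i M) b := by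
  have hq := (isComponent_exceedComponent (f := f) he i n).sub
  have hD := (isComponent_sparseComponent (f := f) he i M).sub
  have hsub : e - exceptionalComponent e f n ≤
      (e - exceedComponent e f i n) + (e - sparseComponent e f i M) :=
    calc e - exceptionalComponent e f n
        ≤ e - exceedComponent e f i n ⊓ sparseComponent e f i M :=
          sub_le_sub_left (exceedComponent_inf_sparseComponent_le he hi hM) e
      _ ≤ (e - exceedComponent e f i n) + (e - sparseComponent e f i M) := by
          rw [sub_inf]
          exact sup_le (le_add_of_nonneg_right hD.1) (le_add_of_nonneg_left hq.1)
  calc bandProj (e - exceptionalComponent e f n) (f n)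
      ≤ bandProj (e - exceedComponent e f i n) (f n) +
          bandProj (e - sparseComponent e f i M) (f n) :=
        (bandProj_mono_left hsub _).trans (bandProj_add_left_le hq.1 hD.1 (hf0 n))
    _ ≤ ((i + 1 : ℕ) : ℝ)⁻¹ • e + bandProj (e - sparseComponent e f i M) b :=
        add_le_add (bandProj_sub_exceedComponent_le he hf0 i n) (bandProj_mono_right _ (hfb n))

theorem densityZero_exceptionalComponent (he : 0 ≤ e) (hf0 : ∀ n, 0 ≤ f n)
    (hmean : OrderConvergesTo (cesaroMean f) 0) : DensityZero (exceptionalComponent e f) := by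
  have hp := isComponent_exceptionalComponent (f := f) he
  show OrderConvergesTo (cesaroMean (exceptionalComponent e f)) 0
  refine orderConvergesTo_zero_of_forall_eventually_le (cesaroMean_nonneg fun n => (hp n).1)
    ⟨e, Set.forall_mem_range.2 (cesaroMean_le he fun n => (hp n).2.1)⟩
    (isGLB_range_inv_natCast_succ_smul_add he (isGLB_range_sub_sparseComponent he hf0 hmean))
    fun iM => ⟨0, orderConvergesTo_const 0, iM.1 + iM.2 + 1, fun n hn => ?_⟩
  simpa using cesaroMean_exceptionalComponent_le he hf0 (show iM.1 < n by omega)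
    (show iM.2 ≤ n by omega)

theorem orderConvergesTo_bandProj_sub_exceptionalComponent (he : 0 ≤ e)
    (hwu : ∀ x : E, e ⊓ |x| = 0 → x = 0) (hf0 : ∀ n, 0 ≤ f n) {b : E} (hfb : ∀ n, f n ≤ b)
    (hmean : OrderConvergesTo (cesaroMean f) 0) :
    OrderConvergesTo (fun n => bandProj (e - exceptionalComponent e f n) (f n)) 0 := by
  have hb : 0 ≤ b := (hf0 0).trans (hfb 0)
  refine orderConvergesTo_zero_of_forall_eventually_le (fun n => bandProj_nonneg _ (hf0 n))
    ⟨b, Set.forall_mem_range.2 fun n => (bandProj_le_self _ _).trans (hfb n)⟩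
    (isGLB_range_inv_natCast_succ_smul_add he fun i =>
      isGLB_range_bandProj he hwu (fun M => (isComponent_sparseComponent he i M).sub)
        (isGLB_range_sub_sparseComponent he hf0 hmean i) hb)
    fun iM => ⟨0, orderConvergesTo_const 0, iM.1 + iM.2, fun n hn => ?_⟩
  simpa using bandProj_sub_exceptionalComponent_le he hf0 hfb (show iM.1 ≤ n by omega)
    (show iM.2 ≤ n by omega)

end KoopmanVonNeumann

/-- Koopman–von Neumann in Riesz spaces: for an order bounded sequence
`(f_n)` in `E₊`, the Cesàro averages order converge to `0` iff there is a density zero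
sequence `(p_n)` of components of `e` with `(e - p_n)·f_n → 0` in order, where
multiplication by the component `e - p_n` is the associated band projection. -/
theorem koopman_von_neumann
    {E : Type*} [ConditionallyCompleteLattice E] [AddCommGroup E] [Module ℝ E]
    [CovariantClass E E (· + ·) (· ≤ ·)]
    (e : E) (he : 0 < e) (hwu : ∀ x : E, e ⊓ |x| = 0 → x = 0)
    (f : ℕ → E) (hf0 : ∀ n, 0 ≤ f n) (hbdd : ∃ b : E, ∀ n, f n ≤ b) :
    OrderConvergesTo (fun n => (n : ℝ)⁻¹ • ∑ k ∈ Finset.range n, f k) (0 : E) ↔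
      ∃ p : ℕ → E, (∀ n, IsComponent e (p n)) ∧ DensityZero p ∧
        OrderConvergesTo (fun n => bandProj (e - p n) (f n)) (0 : E) := by
  obtain ⟨b, hfb⟩ := hbdd
  constructor
  · intro hmean
    exact ⟨KoopmanVonNeumann.exceptionalComponent e f,
      KoopmanVonNeumann.isComponent_exceptionalComponent he.le,
      KoopmanVonNeumann.densityZero_exceptionalComponent he.le hf0 hmean,
      KoopmanVonNeumann.orderConvergesTo_bandProj_sub_exceptionalComponent he.le hwu hf0 hfb hmean⟩
  · rintro ⟨p, hp, hdens, hconv⟩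
    exact orderConvergesTo_cesaroMean_of_densityZero he.le hwu hf0 hfb hp hdens hconv
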